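/- The algebra of trace-free 3×3 real symmetric matrices with the product A ⋄ B = ½(AB + BA) − (1/3) tr(AB) I (the trace-free part of the Jordan product) is a simple algebra: its only ideals are {0} and the whole algebra. -/
import Mathlib

open Matrix

noncomputable section

/-- The trace-free part of the Jordan product on 3×3 symmetric trace-free
matrices: A ⋄ B = ½(AB + BA) − (1/3) tr(AB) I. -/
def dia (A B : Matrix (Fin 3) (Fin 3) ℝ) : Matrix (Fin 3) (Fin 3) ℝ :=
  (1/2 : ℝ) • (A * B + B * A) - ((1/3 : ℝ) * Matrix.trace (A * B)) • (1 : Matrix (Fin 3) (Fin 3) ℝ)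

/-- The generic trace-free symmetric 3×3 matrix. -/
def Mm (a b d e f : ℝ) : Matrix (Fin 3) (Fin 3) ℝ := !![a,d,e; d,b,f; e,f,-a-b]

lemma Mm_symm (a b d e f : ℝ) : (Mm a b d e f)ᵀ = Mm a b d e f := by
  ext i j; fin_cases i <;> fin_cases j <;> rfl

lemma Mm_trace (a b d e f : ℝ) : Matrix.trace (Mm a b d e f) = 0 := by
  simp [Mm, Matrix.trace, Fin.sum_univ_three]

lemma Mm_smul (c a b d e f : ℝ) : c • Mm a b d e f = Mm (c*a) (c*b) (c*d) (c*e) (c*f) := by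
  ext i j; fin_cases i <;> fin_cases j <;> simp [Mm] <;> ring

lemma Mm_add (a b d e f a' b' d' e' f' : ℝ) :
    Mm a b d e f + Mm a' b' d' e' f' = Mm (a+a') (b+b') (d+d') (e+e') (f+f') := by
  ext i j; fin_cases i <;> fin_cases j <;> simp [Mm] <;> ring

lemma Mm_zero : Mm 0 0 0 0 0 = 0 := by
  ext i j; fin_cases i <;> fin_cases j <;>
    simp [Mm, Matrix.zero_apply, Matrix.vecHead, Matrix.vecTail]

lemma eq_Mm_self (B : Matrix (Fin 3) (Fin 3) ℝ) (h1 : Bᵀ = B) (h2 : Matrix.trace B = 0) :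
    B = Mm (B 0 0) (B 1 1) (B 0 1) (B 0 2) (B 1 2) := by
  have h10 : B 1 0 = B 0 1 := congrFun (congrFun h1 0) 1
  have h20 : B 2 0 = B 0 2 := congrFun (congrFun h1 0) 2
  have h21 : B 2 1 = B 1 2 := congrFun (congrFun h1 1) 2
  have h22 : B 2 2 = -(B 0 0) - B 1 1 := by
    simp [Matrix.trace, Fin.sum_univ_three, Matrix.diag] at h2
    linarith
  ext i j; fin_cases i <;> fin_cases j <;> simp [Mm, h10, h20, h21, h22]

lemma dia_Mm_D (a b d e f : ℝ) :
    dia (Mm a b d e f) (Mm 1 (-1) 0 0 0) =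
      Mm ((2*a+b)/3) (-(a+2*b)/3) 0 (e/2) (-(f/2)) := by
  ext i j; fin_cases i <;> fin_cases j <;>
    simp [dia, Mm, Matrix.mul_apply, Fin.sum_univ_three, Matrix.trace, Matrix.diag,
      Matrix.one_apply] <;> ring

lemma dia_Mm_S12 (a b d e f : ℝ) :
    dia (Mm a b d e f) (Mm 0 0 1 0 0) = Mm (d/3) (d/3) ((a+b)/2) (f/2) (e/2) := by
  ext i j; fin_cases i <;> fin_cases j <;>
    simp [dia, Mm, Matrix.mul_apply, Fin.sum_univ_three, Matrix.trace, Matrix.diag,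
      Matrix.one_apply] <;> ring

lemma dia_Mm_S13 (a b d e f : ℝ) :
    dia (Mm a b d e f) (Mm 0 0 0 1 0) = Mm (e/3) (-(2*e/3)) (f/2) (-(b/2)) (d/2) := by
  ext i j; fin_cases i <;> fin_cases j <;>
    simp [dia, Mm, Matrix.mul_apply, Fin.sum_univ_three, Matrix.trace, Matrix.diag,
      Matrix.one_apply] <;> ring

lemma dia_Mm_S23 (a b d e f : ℝ) :
    dia (Mm a b d e f) (Mm 0 0 0 0 1) = Mm (-(2*f/3)) (f/3) (e/2) (d/2) (-(a/2)) := by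
  ext i j; fin_cases i <;> fin_cases j <;>
    simp [dia, Mm, Matrix.mul_apply, Fin.sum_univ_three, Matrix.trace, Matrix.diag,
      Matrix.one_apply] <;> ring

set_option maxHeartbeats 1000000 in
/-- The algebra Herm₀(3,ℝ) of trace-free 3×3 real symmetric matrices with the
trace-free Jordan product ⋄ is simple: any ideal (a subspace I of Herm₀(3,ℝ) with
I ⋄ Herm₀(3,ℝ) ⊆ I) is {0} or all of Herm₀(3,ℝ). -/
theorem herm0_simple (I : Set (Matrix (Fin 3) (Fin 3) ℝ))
    (h0 : (0 : Matrix (Fin 3) (Fin 3) ℝ) ∈ I)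
    (hadd : ∀ A ∈ I, ∀ B ∈ I, A + B ∈ I)
    (hsmul : ∀ (c : ℝ), ∀ A ∈ I, c • A ∈ I)
    (hsub : ∀ A ∈ I, Aᵀ = A ∧ Matrix.trace A = 0)
    (hideal : ∀ A ∈ I, ∀ B : Matrix (Fin 3) (Fin 3) ℝ,
        Bᵀ = B → Matrix.trace B = 0 → dia A B ∈ I) :
    (∀ A ∈ I, A = 0) ∨
    (∀ B : Matrix (Fin 3) (Fin 3) ℝ, Bᵀ = B → Matrix.trace B = 0 → B ∈ I) := by
  -- generic helper: adjust the entries of a known member by ring identities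
  have fix : ∀ {a b d e f : ℝ} (a' b' d' e' f' : ℝ), Mm a b d e f ∈ I →
      a' = a → b' = b → d' = d → e' = e → f' = f → Mm a' b' d' e' f' ∈ I := by
    intro a b d e f a' b' d' e' f' h h1 h2 h3 h4 h5
    rw [h1, h2, h3, h4, h5]; exact h
  by_cases htriv : ∀ A ∈ I, A = 0
  · exact Or.inl htriv
  right
  push_neg at htriv
  obtain ⟨A, hAI, hAne⟩ := htriv
  obtain ⟨hAs, hAt⟩ := hsub A hAI
  have hAeq := eq_Mm_self A hAs hAt
  -- it suffices to produce one of the off-diagonal generators in I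
  suffices hS : Mm 0 0 1 0 0 ∈ I ∨ Mm 0 0 0 1 0 ∈ I ∨ Mm 0 0 0 0 1 ∈ I by
    -- from any one of them, get S12 and S13 in I
    have key : Mm 0 0 1 0 0 ∈ I ∧ Mm 0 0 0 1 0 ∈ I ∧ Mm 0 0 0 0 1 ∈ I := by
      rcases hS with h12 | h13 | h23
      · -- dia(S12,S23) = ½ S13 ; dia(S12,S13) = ½ S23
        have t1 := hideal _ h12 _ (Mm_symm 0 0 0 0 1) (Mm_trace 0 0 0 0 1)
        rw [dia_Mm_S23] at t1
        have t1' := hsmul 2 _ t1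
        rw [Mm_smul] at t1'
        have h13 : Mm 0 0 0 1 0 ∈ I :=
          fix _ _ _ _ _ t1' (by norm_num) (by norm_num) (by norm_num) (by norm_num) (by norm_num)
        have t2 := hideal _ h12 _ (Mm_symm 0 0 0 1 0) (Mm_trace 0 0 0 1 0)
        rw [dia_Mm_S13] at t2
        have t2' := hsmul 2 _ t2
        rw [Mm_smul] at t2'
        exact ⟨h12, h13,
          fix _ _ _ _ _ t2' (by norm_num) (by norm_num) (by norm_num) (by norm_num) (by norm_num)⟩
      · have t1 := hideal _ h13 _ (Mm_symm 0 0 0 0 1) (Mm_trace 0 0 0 0 1)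
        rw [dia_Mm_S23] at t1
        have t1' := hsmul 2 _ t1
        rw [Mm_smul] at t1'
        have h12 : Mm 0 0 1 0 0 ∈ I :=
          fix _ _ _ _ _ t1' (by norm_num) (by norm_num) (by norm_num) (by norm_num) (by norm_num)
        have t2 := hideal _ h13 _ (Mm_symm 0 0 1 0 0) (Mm_trace 0 0 1 0 0)
        rw [dia_Mm_S12] at t2
        have t2' := hsmul 2 _ t2
        rw [Mm_smul] at t2'
        exact ⟨h12, h13,
          fix _ _ _ _ _ t2' (by norm_num) (by norm_num) (by norm_num) (by norm_num) (by norm_num)⟩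
      · have t1 := hideal _ h23 _ (Mm_symm 0 0 1 0 0) (Mm_trace 0 0 1 0 0)
        rw [dia_Mm_S12] at t1
        have t1' := hsmul 2 _ t1
        rw [Mm_smul] at t1'
        have h13 : Mm 0 0 0 1 0 ∈ I :=
          fix _ _ _ _ _ t1' (by norm_num) (by norm_num) (by norm_num) (by norm_num) (by norm_num)
        have t2 := hideal _ h23 _ (Mm_symm 0 0 0 1 0) (Mm_trace 0 0 0 1 0)
        rw [dia_Mm_S13] at t2
        have t2' := hsmul 2 _ t2
        rw [Mm_smul] at t2'
        exact ⟨fix _ _ _ _ _ t2' (by norm_num) (by norm_num) (by norm_num) (by norm_num)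
          (by norm_num), h13, h23⟩
    obtain ⟨h12, h13, h23⟩ := key
    -- two diagonal generators
    have hP0 := hideal _ h12 _ (Mm_symm 0 0 1 0 0) (Mm_trace 0 0 1 0 0)
    rw [dia_Mm_S12] at hP0
    have hP : Mm (1/3) (1/3) 0 0 0 ∈ I :=
      fix _ _ _ _ _ hP0 (by norm_num) (by norm_num) (by norm_num) (by norm_num) (by norm_num)
    have hQ0 := hideal _ h13 _ (Mm_symm 0 0 0 1 0) (Mm_trace 0 0 0 1 0)
    rw [dia_Mm_S13] at hQ0
    have hQ : Mm (1/3) (-(2/3)) 0 0 0 ∈ I :=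
      fix _ _ _ _ _ hQ0 (by norm_num) (by norm_num) (by norm_num) (by norm_num) (by norm_num)
    -- now any symmetric traceless B is a combination
    intro B hBs hBt
    rw [eq_Mm_self B hBs hBt]
    have hc := hadd _ (hsmul (2*B 0 0 + B 1 1) _ hP) _
      (hadd _ (hsmul (B 0 0 - B 1 1) _ hQ) _
        (hadd _ (hsmul (B 0 1) _ h12) _
          (hadd _ (hsmul (B 0 2) _ h13) _ (hsmul (B 1 2) _ h23))))
    rw [Mm_smul, Mm_smul, Mm_smul, Mm_smul, Mm_smul, Mm_add, Mm_add, Mm_add, Mm_add] at hc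
    exact fix _ _ _ _ _ hc (by ring) (by ring) (by ring) (by ring) (by ring)
  -- produce an off-diagonal generator from the nonzero element A
  have hMem0 : Mm (A 0 0) (A 1 1) (A 0 1) (A 0 2) (A 1 2) ∈ I := by rw [← hAeq]; exact hAI
  have hnz0 : ¬(A 0 0 = 0 ∧ A 1 1 = 0 ∧ A 0 1 = 0 ∧ A 0 2 = 0 ∧ A 1 2 = 0) := by
    rintro ⟨h1, h2, h3, h4, h5⟩
    apply hAne
    rw [hAeq, h1, h2, h3, h4, h5, Mm_zero]
  obtain ⟨a, b, d, e, f, hMem, hnz⟩ :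
      ∃ a b d e f : ℝ, Mm a b d e f ∈ I ∧ ¬(a = 0 ∧ b = 0 ∧ d = 0 ∧ e = 0 ∧ f = 0) :=
    ⟨_, _, _, _, _, hMem0, hnz0⟩
  clear hAeq hAne hAs hAt hAI hMem0 hnz0
  -- iterate multiplication by the diagonal element Mm 1 (-1) 0 0 0
  have step : ∀ {a b d e f : ℝ}, Mm a b d e f ∈ I →
      Mm ((2*a+b)/3) (-(a+2*b)/3) 0 (e/2) (-(f/2)) ∈ I := by
    intro a b d e f h
    rw [← dia_Mm_D]
    exact hideal _ h _ (Mm_symm 1 (-1) 0 0 0) (Mm_trace 1 (-1) 0 0 0)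
  have h1 := step hMem
  have h2 := step h1
  have h3 := step h2
  have h4 := step h3
  by_cases hd0 : d ≠ 0
  · -- extract S12 : 12•h4 + ((-7)•h2 + A)  = Mm 0 0 d 0 0
    left
    have hc := hadd _ (hsmul 12 _ h4) _ (hadd _ (hsmul (-7) _ h2) _ hMem)
    rw [Mm_smul, Mm_smul, Mm_add, Mm_add] at hc
    have hD : Mm 0 0 d 0 0 ∈ I :=
      fix _ _ _ _ _ hc (by ring) (by ring) (by ring) (by ring) (by ring)
    have hc2 := hsmul (1/d) _ hD
    rw [Mm_smul] at hc2
    exact fix _ _ _ _ _ hc2 (by ring) (by ring) (by field_simp) (by ring) (by ring)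
  by_cases he0 : e ≠ 0
  · -- extract S13 : (-24)•h4 + ((-12)•h3 + (8•h2 + 4•h1)) = Mm 0 0 0 e 0
    right; left
    have hc := hadd _ (hsmul (-24) _ h4) _
      (hadd _ (hsmul (-12) _ h3) _ (hadd _ (hsmul 8 _ h2) _ (hsmul 4 _ h1)))
    rw [Mm_smul, Mm_smul, Mm_smul, Mm_smul, Mm_add, Mm_add, Mm_add] at hc
    have hD : Mm 0 0 0 e 0 ∈ I :=
      fix _ _ _ _ _ hc (by ring) (by ring) (by ring) (by ring) (by ring)
    have hc2 := hsmul (1/e) _ hD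
    rw [Mm_smul] at hc2
    exact fix _ _ _ _ _ hc2 (by ring) (by ring) (by ring) (by field_simp) (by ring)
  by_cases hf0 : f ≠ 0
  · -- extract S23 : (-24)•h4 + (12•h3 + (8•h2 + (-4)•h1)) = Mm 0 0 0 0 f
    right; right
    have hc := hadd _ (hsmul (-24) _ h4) _
      (hadd _ (hsmul 12 _ h3) _ (hadd _ (hsmul 8 _ h2) _ (hsmul (-4) _ h1)))
    rw [Mm_smul, Mm_smul, Mm_smul, Mm_smul, Mm_add, Mm_add, Mm_add] at hc
    have hD : Mm 0 0 0 0 f ∈ I :=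
      fix _ _ _ _ _ hc (by ring) (by ring) (by ring) (by ring) (by ring)
    have hc2 := hsmul (1/f) _ hD
    rw [Mm_smul] at hc2
    exact fix _ _ _ _ _ hc2 (by ring) (by ring) (by ring) (by ring) (by field_simp)
  -- now d = e = f = 0 and a ≠ 0 or b ≠ 0
  push_neg at hd0 he0 hf0
  have hab : a ≠ 0 ∨ b ≠ 0 := by
    by_contra hcon
    push_neg at hcon
    exact hnz ⟨hcon.1, hcon.2, hd0, he0, hf0⟩
  rw [hd0, he0, hf0] at hMem
  rcases hab with ha0 | hb0
  · -- dia(A, S23) = Mm 0 0 0 0 (-(a/2))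
    right; right
    have t := hideal _ hMem _ (Mm_symm 0 0 0 0 1) (Mm_trace 0 0 0 0 1)
    rw [dia_Mm_S23] at t
    have t2 := hsmul (-(2/a)) _ t
    rw [Mm_smul] at t2
    exact fix _ _ _ _ _ t2 (by ring) (by ring) (by ring) (by ring) (by field_simp)
  · -- dia(A, S13) = Mm 0 0 0 (-(b/2)) 0
    right; left
    have t := hideal _ hMem _ (Mm_symm 0 0 0 1 0) (Mm_trace 0 0 0 1 0)
    rw [dia_Mm_S13] at t
    have t2 := hsmul (-(2/b)) _ t
    rw [Mm_smul] at t2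
    exact fix _ _ _ _ _ t2 (by ring) (by ring) (by ring) (by field_simp) (by ring)
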